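/- Let E ≥ 1 be a natural number, let M ≥ 1 and C ≥ 1 be natural numbers, let L₂, σ be nonnegative reals and let η, L₁, B be strictly positive reals. Let a : ℕ → ℝ be a sequence, fix a round r ∈ ℕ, and suppose: (i) a_{rE+1} ≤ a_{rE} + (L₁η²/2 − η)B² + (L₁η²/2)σ² + L₂·E·η·C·B·(M+2)/(M+1); and (ii) for every e with 1 ≤ e ≤ E−1, a_{rE+e+1} ≤ a_{rE+e} + (L₁η²/2 − η)B² + (L₁η²/2)σ². If in addition the learning rate satisfies η < (2(M+1)B² − 2(M+2)L₂·C·B) / (L₁(M+1)(σ² + B²)), then the expected objective strictly decreases over the round: a_{(r+1)E} < a_{rE}. -/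
import Mathlib

/-- Theorem 2 of FedSC (non-convex convergence): under the per-step inequalities derived
from Assumptions 1–4 and the stated learning-rate condition, the expected objective
strictly decreases over each communication round. -/
theorem fedsc_nonconvex_convergence
    (E M C : ℕ) (hE : 1 ≤ E) (hM : 1 ≤ M) (hC : 1 ≤ C)
    (L₂ σ : ℝ) (hL₂ : 0 ≤ L₂) (hσ : 0 ≤ σ)
    (η L₁ B : ℝ) (hη : 0 < η) (hL₁ : 0 < L₁) (hB : 0 < B)
    (a : ℕ → ℝ) (r : ℕ)
    (h1 : a (r * E + 1) ≤ a (r * E) + (L₁ * η ^ 2 / 2 - η) * B ^ 2 + (L₁ * η ^ 2 / 2) * σ ^ 2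
        + L₂ * (E : ℝ) * η * (C : ℝ) * B * ((M : ℝ) + 2) / ((M : ℝ) + 1))
    (h2 : ∀ e : ℕ, 1 ≤ e → e ≤ E - 1 →
        a (r * E + e + 1) ≤ a (r * E + e) + (L₁ * η ^ 2 / 2 - η) * B ^ 2
          + (L₁ * η ^ 2 / 2) * σ ^ 2)
    (hrate : η < (2 * ((M : ℝ) + 1) * B ^ 2 - 2 * ((M : ℝ) + 2) * L₂ * (C : ℝ) * B)
        / (L₁ * ((M : ℝ) + 1) * (σ ^ 2 + B ^ 2))) :
    a ((r + 1) * E) < a (r * E) := by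
  set D : ℝ := (L₁ * η ^ 2 / 2 - η) * B ^ 2 + (L₁ * η ^ 2 / 2) * σ ^ 2 with hDdef
  have hMpos : (0:ℝ) < (M : ℝ) + 1 := by positivity
  have hden : (0:ℝ) < L₁ * ((M : ℝ) + 1) * (σ ^ 2 + B ^ 2) := by positivity
  have hrate' := (lt_div_iff₀ hden).mp hrate
  have hCpos : (0:ℝ) < (C : ℝ) := by exact_mod_cast hC
  -- key: D + L₂*η*C*B*(M+2)/(M+1) < 0
  have hkey : D + L₂ * η * (C : ℝ) * B * ((M : ℝ) + 2) / ((M : ℝ) + 1) < 0 := by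
    have h4 := mul_lt_mul_of_pos_left hrate' hη
    have h5 : (D + L₂ * η * (C : ℝ) * B * ((M : ℝ) + 2) / ((M : ℝ) + 1)) * (2 * ((M : ℝ) + 1))
        = η * (η * (L₁ * ((M : ℝ) + 1) * (σ ^ 2 + B ^ 2)))
          - η * (2 * ((M : ℝ) + 1) * B ^ 2 - 2 * ((M : ℝ) + 2) * L₂ * (C : ℝ) * B) := by
      rw [hDdef]; field_simp; ring
    nlinarith [h4, h5, hMpos]
  -- induction: a (r*E + e) ≤ a (r*E + 1) + (e-1) * D for 1 ≤ e ≤ E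
  have hstep : ∀ e : ℕ, 1 ≤ e → e ≤ E → a (r * E + e) ≤ a (r * E + 1) + ((e : ℝ) - 1) * D := by
    intro e he heE
    induction e with
    | zero => omega
    | succ n ih =>
      rcases Nat.eq_or_lt_of_le he with h | h
      · simp [← h]
      · have hn1 : 1 ≤ n := by omega
        have hnE : n ≤ E - 1 := by omega
        have := h2 n hn1 hnE
        have ihn := ih hn1 (by omega)
        push_cast
        have : a (r * E + (n + 1)) ≤ a (r * E + n) + D := by
          rw [hDdef]
          show a (r * E + n + 1) ≤ _
          linarith [h2 n hn1 hnE]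
        calc a (r * E + (n + 1)) ≤ a (r * E + n) + D := this
          _ ≤ a (r * E + 1) + ((n : ℝ) - 1) * D + D := by linarith
          _ = a (r * E + 1) + ((n : ℝ) + 1 - 1) * D := by ring
  have hE' := hstep E hE le_rfl
  have hEq : (r + 1) * E = r * E + E := by ring
  rw [hEq]
  have hEpos : (1:ℝ) ≤ (E : ℝ) := by exact_mod_cast hE
  have hextra : L₂ * (E : ℝ) * η * (C : ℝ) * B * ((M : ℝ) + 2) / ((M : ℝ) + 1)
      = (E : ℝ) * (L₂ * η * (C : ℝ) * B * ((M : ℝ) + 2) / ((M : ℝ) + 1)) := by ring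
  have hEtot : (E : ℝ) * (D + L₂ * η * (C : ℝ) * B * ((M : ℝ) + 2) / ((M : ℝ) + 1)) < 0 :=
    mul_neg_of_pos_of_neg (by linarith) hkey
  have h1' : a (r * E + 1) ≤ a (r * E) + D
      + L₂ * (E : ℝ) * η * (C : ℝ) * B * ((M : ℝ) + 2) / ((M : ℝ) + 1) := by
    rw [hDdef]; linarith
  calc a (r * E + E) ≤ a (r * E + 1) + ((E : ℝ) - 1) * D := hE'
    _ ≤ a (r * E) + D + L₂ * (E : ℝ) * η * (C : ℝ) * B * ((M : ℝ) + 2) / ((M : ℝ) + 1)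
        + ((E : ℝ) - 1) * D := by linarith
    _ = a (r * E) + (E : ℝ) * (D + L₂ * η * (C : ℝ) * B * ((M : ℝ) + 2) / ((M : ℝ) + 1)) := by
        rw [hextra]; ring
    _ < a (r * E) := by linarith
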